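/- The sequence {A, 0, 0, 0, …} (a single entry A followed by zeros), where 0 < A < B, is not the diagonal of any self-adjoint operator with spectrum {0,A,B}, even though with C = ∑_{d_i<A} d_i = 0 and D = ∑_{d_i≥A}(B−d_i) = B−A, the conditions C − D = NA + kB and C ≥ (N+k)A are satisfied with N = 1 and k = −1. -/

import Mathlib

/-!
Since its spectrum {0, A, B} is nonnegative, E is a positive operator, and a positive operator
annihilates every vector on which its quadratic form vanishes. Hence E kills b i for i ≠ 0, so
E (b 0) = A • b 0 and E (E - A) = 0 on the basis, hence everywhere. The spectrum of E then lies
among the roots {0, A} of X (X - A), which misses B.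
-/

open scoped RealInnerProductSpace

theorem HilbertBasis.ext_inner {ι 𝕜 E : Type*} [RCLike 𝕜] [NormedAddCommGroup E]
    [InnerProductSpace 𝕜 E] (b : HilbertBasis ι 𝕜 E) {x y : E}
    (h : ∀ i, inner 𝕜 (b i) x = inner 𝕜 (b i) y) : x = y :=
  b.repr.injective <| lp.ext <| funext fun i => by simp only [b.repr_apply_apply, h]

theorem HilbertBasis.ext_continuousLinearMap {ι 𝕜 E F : Type*} [RCLike 𝕜] [NormedAddCommGroup E]
    [InnerProductSpace 𝕜 E] [TopologicalSpace F] [AddCommMonoid F] [Module 𝕜 F] [T2Space F]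
    (b : HilbertBasis ι 𝕜 E) {f g : E →L[𝕜] F} (h : ∀ i, f (b i) = g (b i)) : f = g :=
  ContinuousLinearMap.ext_on (s := Set.range b)
    (by simp [Submodule.dense_iff_topologicalClosure_eq_top]) (Set.forall_mem_range.mpr h)

open Polynomial in
theorem spectrum.subset_pair_of_mul_sub_algebraMap_eq_zero {𝕜 A : Type*} [Field 𝕜] [Ring A]
    [Algebra 𝕜 A] [Nontrivial A] {a : A} {r : 𝕜} (ha : a * (a - algebraMap 𝕜 A r) = 0) :
    spectrum 𝕜 a ⊆ {0, r} := by
  intro k hk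
  have h := spectrum.subset_polynomial_aeval a (X * (X - C r)) ⟨k, hk, rfl⟩
  simp only [map_mul, map_sub, aeval_X, aeval_C, ha, spectrum.zero_eq, eval_mul, eval_sub,
    eval_X, eval_C, Set.mem_singleton_iff, mul_eq_zero, sub_eq_zero] at h
  simpa using h

namespace ContinuousLinearMap
variable {H : Type*} [NormedAddCommGroup H] [InnerProductSpace ℝ H]

theorem IsPositive.apply_eq_zero_of_inner_map_self_eq_zero {T : H →L[ℝ] H} (hT : T.IsPositive)
    {x : H} (hx : ⟪T x, x⟫ = 0) : T x = 0 := by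
  have hquad (y : H) (t : ℝ) : 0 ≤ ⟪T y, y⟫ * (t * t) + 2 * ⟪T x, y⟫ * t + 0 := by
    have h := hT.inner_nonneg_left (x + t • y)
    have hsymm : ⟪T y, x⟫ = ⟪T x, y⟫ := by
      rw [hT.inner_left_eq_inner_right, real_inner_comm]
    simp only [map_add, map_smul, inner_add_left, inner_add_right, real_inner_smul_left,
      real_inner_smul_right, hx, hsymm] at h
    linarith
  have h := discrim_le_zero (hquad (T x))
  rw [discrim, real_inner_self_eq_norm_sq] at h
  have : ‖T x‖ ^ 2 = 0 := by nlinarith [sq_nonneg (‖T x‖ ^ 2)]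
  simpa using this

theorem isPositive_of_isSelfAdjoint_of_spectrum_nonneg [CompleteSpace H] {T : H →L[ℝ] H}
    (hT : IsSelfAdjoint T) (hσ : ∀ r ∈ spectrum ℝ T, 0 ≤ r) : T.IsPositive := by
  rcases subsingleton_or_nontrivial H with hH | hH
  · exact Subsingleton.elim (0 : H →L[ℝ] H) T ▸ isPositive_zero
  -- `‖T‖ - T` has spectrum in `[0, ‖T‖]`, and its norm is its spectral radius.
  set S := algebraMap ℝ (H →L[ℝ] H) ‖T‖ - T
  have hS : IsSelfAdjoint S := (IsSelfAdjoint.algebraMap _ (.all _)).sub hT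
  have hSnorm : ‖S‖ ≤ ‖T‖ := by
    have h := (SpectrumRestricts.nnreal_iff_spectralRadius_le (t := ‖T‖₊)
      (spectrum.spectralRadius_le_nnnorm T)).mp (SpectrumRestricts.nnreal_iff.mpr hσ)
    rw [coe_nnnorm, spectralRadius_eq_nnnorm S hS] at h
    exact_mod_cast h
  refine (isPositive_def' (T := T)).mpr ⟨hT, fun x => ?_⟩
  have h : ⟪S x, x⟫ ≤ ‖T‖ * ‖x‖ ^ 2 := by
    calc ⟪S x, x⟫ ≤ ‖S x‖ * ‖x‖ := real_inner_le_norm _ _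
      _ ≤ ‖S‖ * ‖x‖ * ‖x‖ := by gcongr; exact S.le_opNorm x
      _ ≤ ‖T‖ * ‖x‖ ^ 2 := by rw [mul_assoc, ← sq]; gcongr
  simp only [S, sub_apply, algebraMap_apply, inner_sub_left, real_inner_smul_left,
    real_inner_self_eq_norm_sq] at h
  simpa [reApplyInnerSelf_apply] using h

theorem IsPositive.mul_sub_algebraMap_eq_zero_of_diagonal {ι : Type*} {T : H →L[ℝ] H}
    (hT : T.IsPositive) (b : HilbertBasis ι ℝ H) {i₀ : ι} {a : ℝ}
    (hi₀ : ⟪T (b i₀), b i₀⟫ = a) (hzero : ∀ i ≠ i₀, ⟪T (b i), b i⟫ = 0) :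
    T * (T - algebraMap ℝ (H →L[ℝ] H) a) = 0 := by
  have hker (i : ι) (hi : i ≠ i₀) : T (b i) = 0 :=
    hT.apply_eq_zero_of_inner_map_self_eq_zero (hzero i hi)
  have heig : T (b i₀) = a • b i₀ := b.ext_inner fun i => by
    rw [real_inner_smul_right, ← hT.inner_left_eq_inner_right]
    rcases eq_or_ne i i₀ with rfl | hi
    · rw [real_inner_self_eq_norm_sq, b.orthonormal.1, hi₀]; ring
    · rw [hker i hi, inner_zero_left, b.orthonormal.2 hi, mul_zero]
  refine b.ext_continuousLinearMap fun i => ?_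
  rcases eq_or_ne i i₀ with rfl | hi
  · simp [heig]
  · simp [hker i hi]

end ContinuousLinearMap

/-- The sequence `(A, 0, 0, …)` is not the diagonal of any self-adjoint operator with
spectrum `{0, A, B}`, even though the conditions `C - D = N·A + k·B` and
`C ≥ (N+k)·A` hold with `N = 1`, `k = -1`, where `C = ∑_{d_i < A} d_i = 0` and
`D = ∑_{d_i ≥ A} (B - d_i) = B - A`. -/
theorem stmt18 (A B : ℝ) (hA : 0 < A) (hAB : A < B)
    (d : ℕ → ℝ) (hd : d = fun i => if i = 0 then A else 0) :
    (¬ ∃ (H : Type) (_ : NormedAddCommGroup H) (_ : InnerProductSpace ℝ H)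
      (_ : CompleteSpace H) (E : H →L[ℝ] H) (b : HilbertBasis ℕ ℝ H),
      IsSelfAdjoint E ∧ spectrum ℝ E = {0, A, B} ∧ ∀ i, ⟪E (b i), b i⟫ = d i) ∧
    (∑' i : {i // d i < A}, ENNReal.ofReal (d i.1)) = 0 ∧
    (∑' i : {i // A ≤ d i}, ENNReal.ofReal (B - d i.1)) = ENNReal.ofReal (B - A) ∧
    (0 : ℝ) - (B - A) = 1 * A + (-1 : ℤ) * B ∧
    (((1 : ℕ) : ℝ) + (-1 : ℤ)) * A ≤ 0 := by
  subst hd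
  refine ⟨?_, ?_, ?_, by push_cast; ring, by push_cast; norm_num⟩
  · rintro ⟨H, _, _, _, E, b, hE, hσ, hdiag⟩
    have hpos : E.IsPositive :=
      ContinuousLinearMap.isPositive_of_isSelfAdjoint_of_spectrum_nonneg hE <| by
      rw [hσ]; rintro r (rfl | rfl | rfl) <;> linarith
    have hproj := hpos.mul_sub_algebraMap_eq_zero_of_diagonal b (by simpa using hdiag 0)
      fun i hi => by simpa [hi] using hdiag i
    have : Nontrivial H := ⟨⟨b 0, 0, b.orthonormal.ne_zero 0⟩⟩
    have hBσ : B ∈ spectrum ℝ E := by simp [hσ]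
    obtain hB | hB : B = 0 ∨ B = A := spectrum.subset_pair_of_mul_sub_algebraMap_eq_zero hproj hBσ
    all_goals linarith
  · refine ENNReal.tsum_eq_zero.mpr fun ⟨i, hi⟩ => ?_
    rcases eq_or_ne i 0 with rfl | h
    · simp at hi
    · simp [h]
  · rw [tsum_eq_single ⟨0, by simp⟩]
    · simp
    · rintro ⟨i, hi⟩ hne
      rcases eq_or_ne i 0 with rfl | h
      · exact absurd rfl hne
      · simp [h] at hi; linarith
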